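/- arXiv:2107.04807 — 3 statements merged into one kernel-verified Lean document; each statement's English description precedes it below -/
import Mathlib

section
/- Let a : ℝ^d → ℝ be smooth, strongly convex with compact level set Σ_τ on which ∇a ≠ 0. For x ≠ y with |x−y| small, the equation x − y = −t ∇a(θ), a(θ) = τ has exactly two solutions (t₊, θ₊) with t₊ > 0 and (t₋, θ₋) with t₋ < 0, and moreover |t±| ≍ |x−y|, i.e. c|x−y| ≤ |t±| ≤ C|x−y| with constants depending only on the bounds for ∇a on Σ_τ. -/
open Real RealInnerProductSpace

/-- For a strongly convex compact level surface with `c₁ ≤ |∇a| ≤ c₂`, the equation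
`x − y = −t ∇a(θ)`, `a(θ) = τ` has (for `x ≠ y` with `|x−y|` small) exactly one solution
with `t > 0` and one with `t < 0`, and `|t| ≍ |x−y|`. (Eq. (2.14), Proposition 2.2.) -/
theorem stmt3 {d : ℕ} (hd : 2 ≤ d) (a : EuclideanSpace ℝ (Fin d) → ℝ) (τ c₁ c₂ : ℝ)
    (ha : ContDiff ℝ (⊤ : ℕ∞) a) (hc₁ : 0 < c₁)
    (hcomp : IsCompact {θ : EuclideanSpace ℝ (Fin d) | a θ = τ})
    (hlow : ∀ θ ∈ {θ : EuclideanSpace ℝ (Fin d) | a θ = τ}, c₁ ≤ ‖gradient a θ‖)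
    (hup : ∀ θ ∈ {θ : EuclideanSpace ℝ (Fin d) | a θ = τ}, ‖gradient a θ‖ ≤ c₂)
    (hGauss : Set.BijOn (fun θ => ‖gradient a θ‖⁻¹ • gradient a θ)
      {θ : EuclideanSpace ℝ (Fin d) | a θ = τ}
      (Metric.sphere (0 : EuclideanSpace ℝ (Fin d)) 1)) :
    ∃ ε > 0, ∃ c > 0, ∃ C > 0,
      ∀ x y : EuclideanSpace ℝ (Fin d), x ≠ y → ‖x - y‖ < ε →
        (∃! p : ℝ × EuclideanSpace ℝ (Fin d),
          0 < p.1 ∧ a p.2 = τ ∧ x - y = -p.1 • gradient a p.2) ∧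
        (∃! p : ℝ × EuclideanSpace ℝ (Fin d),
          p.1 < 0 ∧ a p.2 = τ ∧ x - y = -p.1 • gradient a p.2) ∧
        (∀ t : ℝ, ∀ θ : EuclideanSpace ℝ (Fin d), a θ = τ →
          x - y = -t • gradient a θ → c * ‖x - y‖ ≤ |t| ∧ |t| ≤ C * ‖x - y‖) := by
  have hd0 : 0 < d := by omega
  have hsph : (Metric.sphere (0 : EuclideanSpace ℝ (Fin d)) 1).Nonempty := by
    refine ⟨EuclideanSpace.single ⟨0, hd0⟩ 1, ?_⟩
    simp [EuclideanSpace.norm_single]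
  obtain ⟨v₀, hv₀⟩ := hsph
  obtain ⟨θ₀, hθ₀, -⟩ := hGauss.surjOn hv₀
  have hc₂ : 0 < c₂ := hc₁.trans_le ((hlow θ₀ hθ₀).trans (hup θ₀ hθ₀))
  have hgpos : ∀ θ, a θ = τ → 0 < ‖gradient a θ‖ := fun θ h => hc₁.trans_le (hlow θ h)
  refine ⟨1, one_pos, c₂⁻¹, by positivity, c₁⁻¹, by positivity, ?_⟩
  intro x y hxy _
  have hnorm : 0 < ‖x - y‖ := by
    rw [norm_pos_iff]; exact sub_ne_zero.mpr hxy
  obtain ⟨u, hu_norm, hxyu⟩ : ∃ u : EuclideanSpace ℝ (Fin d),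
      ‖u‖ = 1 ∧ (‖x - y‖ : ℝ) • u = x - y := by
    refine ⟨‖x - y‖⁻¹ • (x - y), ?_, ?_⟩
    · rw [norm_smul, norm_inv, norm_norm, inv_mul_cancel₀ hnorm.ne']
    · rw [smul_smul, mul_inv_cancel₀ hnorm.ne', one_smul]
  -- any solution (t, θ) has normalized gradient = -(|t|/t) • u and |t|‖∇a θ‖ = ‖x-y‖
  have hsolve : ∀ t : ℝ, ∀ θ, a θ = τ → x - y = -t • gradient a θ → t ≠ 0 →
      ‖gradient a θ‖⁻¹ • gradient a θ = -(|t| / t) • u ∧ |t| * ‖gradient a θ‖ = ‖x - y‖ := by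
    intro t θ hθ heq ht
    have hg : 0 < ‖gradient a θ‖ := hgpos θ hθ
    have habs0 : (0:ℝ) < |t| := abs_pos.mpr ht
    have hnrm : |t| * ‖gradient a θ‖ = ‖x - y‖ := by
      rw [heq, norm_smul, Real.norm_eq_abs, abs_neg]
    refine ⟨?_, hnrm⟩
    have hgeq : gradient a θ = ((-t)⁻¹ * ‖x - y‖) • u := by
      have h1 : (-t)⁻¹ • (x - y) = gradient a θ := by
        rw [heq, smul_smul, inv_mul_cancel₀ (by simpa using ht), one_smul]
      rw [← h1, ← hxyu, smul_smul, norm_smul, norm_norm, hu_norm, mul_one]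
    rw [hgeq, norm_smul, hu_norm, mul_one, smul_smul]
    congr 1
    rw [Real.norm_eq_abs, abs_mul, abs_inv, abs_neg, abs_norm]
    rcases lt_or_gt_of_ne ht with h | h
    · rw [abs_of_neg h]; field_simp
    · rw [abs_of_pos h]; field_simp
  -- existence of a solution with prescribed sign s = ±1
  have hexist : ∀ s : ℝ, s * s = 1 → ∃ p : ℝ × EuclideanSpace ℝ (Fin d),
      (0 < s * p.1) ∧ a p.2 = τ ∧ x - y = -p.1 • gradient a p.2 := by
    intro s hs2
    have hs1 : |s| = 1 := by
      rcases abs_cases s with ⟨h, -⟩ | ⟨h, -⟩ <;> nlinarith [abs_nonneg s]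
    have hsu : -s • u ∈ Metric.sphere (0 : EuclideanSpace ℝ (Fin d)) 1 := by
      simp [norm_smul, hu_norm, hs1]
    obtain ⟨θ, hθ, hθeq⟩ := hGauss.surjOn hsu
    simp only at hθeq
    have hg : 0 < ‖gradient a θ‖ := hgpos θ hθ
    refine ⟨(s * ‖x - y‖ * ‖gradient a θ‖⁻¹, θ), ?_, hθ, ?_⟩
    · have h1 : s * (s * ‖x - y‖ * ‖gradient a θ‖⁻¹) = (s * s) * ‖x - y‖ * ‖gradient a θ‖⁻¹ := by
        ring
      rw [h1, hs2, one_mul]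
      positivity
    · show x - y = -(s * ‖x - y‖ * ‖gradient a θ‖⁻¹) • gradient a θ
      have hgθ : gradient a θ = (-(s * ‖gradient a θ‖)) • u := by
        calc gradient a θ = ‖gradient a θ‖ • (‖gradient a θ‖⁻¹ • gradient a θ) := by
              rw [smul_smul, mul_inv_cancel₀ hg.ne', one_smul]
          _ = ‖gradient a θ‖ • (-s • u) := by rw [hθeq]
          _ = (-(s * ‖gradient a θ‖)) • u := by rw [smul_smul]; congr 1; ring
      nth_rewrite 2 [hgθ]
      rw [smul_smul]
      have hcoef : -(s * ‖x - y‖ * ‖gradient a θ‖⁻¹) * -(s * ‖gradient a θ‖)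
          = (s * s) * ‖x - y‖ * (‖gradient a θ‖⁻¹ * ‖gradient a θ‖) := by ring
      rw [hcoef, hs2, inv_mul_cancel₀ hg.ne', one_mul, mul_one, hxyu]
  have habs : ∀ s : ℝ, 0 < s → |s| / s = 1 := fun s hs => by
    rw [abs_of_pos hs, div_self hs.ne']
  have habs' : ∀ s : ℝ, s < 0 → |s| / s = -1 := fun s hs => by
    rw [abs_of_neg hs, neg_div, div_self hs.ne]
  -- uniqueness: two solutions of the same sign coincide
  have huniq : ∀ p q : ℝ × EuclideanSpace ℝ (Fin d),
      ((0 < p.1 ∧ 0 < q.1) ∨ (p.1 < 0 ∧ q.1 < 0)) →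
      a p.2 = τ → x - y = -p.1 • gradient a p.2 →
      a q.2 = τ → x - y = -q.1 • gradient a q.2 → p = q := by
    rintro ⟨t, θ⟩ ⟨t', θ'⟩ hsgn hθ heq hθ' heq'
    have ht : t ≠ 0 := by
      rcases hsgn with ⟨h, -⟩ | ⟨h, -⟩
      · exact h.ne'
      · exact h.ne
    have ht' : t' ≠ 0 := by
      rcases hsgn with ⟨-, h⟩ | ⟨-, h⟩
      · exact h.ne'
      · exact h.ne
    obtain ⟨h1, h2⟩ := hsolve t θ hθ heq ht
    obtain ⟨h1', h2'⟩ := hsolve t' θ' hθ' heq' ht'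
    have hsgneq : |t| / t = |t'| / t' := by
      rcases hsgn with ⟨hp, hq⟩ | ⟨hp, hq⟩
      · rw [habs _ hp, habs _ hq]
      · rw [habs' _ hp, habs' _ hq]
    have hθθ : θ = θ' := hGauss.injOn hθ hθ' (by simp only; rw [h1, h1', hsgneq])
    subst hθθ
    have hg : 0 < ‖gradient a θ‖ := hgpos θ hθ
    have htt : |t| = |t'| := mul_right_cancel₀ hg.ne' (h2.trans h2'.symm)
    have htt' : t = t' := by
      rcases hsgn with ⟨hp, hq⟩ | ⟨hp, hq⟩
      · rwa [abs_of_pos hp, abs_of_pos hq] at htt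
      · rw [abs_of_neg hp, abs_of_neg hq] at htt; linarith
    rw [htt']
  refine ⟨?_, ?_, ?_⟩
  · obtain ⟨p, hp1, hp2, hp3⟩ := hexist 1 (by norm_num)
    rw [one_mul] at hp1
    exact ⟨p, ⟨hp1, hp2, hp3⟩, fun q ⟨hq1, hq2, hq3⟩ =>
      huniq q p (Or.inl ⟨hq1, hp1⟩) hq2 hq3 hp2 hp3⟩
  · obtain ⟨p, hp1, hp2, hp3⟩ := hexist (-1) (by norm_num)
    have hp1' : p.1 < 0 := by nlinarith
    exact ⟨p, ⟨hp1', hp2, hp3⟩, fun q ⟨hq1, hq2, hq3⟩ =>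
      huniq q p (Or.inr ⟨hq1, hp1'⟩) hq2 hq3 hp2 hp3⟩
  · intro t θ hθ heq
    have hg : 0 < ‖gradient a θ‖ := hgpos θ hθ
    have ht : t ≠ 0 := by
      rintro rfl
      rw [neg_zero, zero_smul] at heq
      exact (sub_ne_zero.mpr hxy) heq
    obtain ⟨-, h2⟩ := hsolve t θ hθ heq ht
    have hlo := hlow θ hθ
    have hhi := hup θ hθ
    have htpos : 0 < |t| := abs_pos.mpr ht
    constructor
    · rw [← h2]
      calc c₂⁻¹ * (|t| * ‖gradient a θ‖) ≤ c₂⁻¹ * (|t| * c₂) := by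
            apply mul_le_mul_of_nonneg_left _ (by positivity)
            nlinarith
        _ = |t| := by field_simp
    · rw [← h2]
      calc |t| = c₁⁻¹ * (|t| * c₁) := by field_simp
        _ ≤ c₁⁻¹ * (|t| * ‖gradient a θ‖) := by
            apply mul_le_mul_of_nonneg_left _ (by positivity)
            nlinarith
end

section
/- Let τ ∈ ℂ with Im τ ≠ 0, j, l ∈ ℕ, and let γ₊ be a closed contour in the upper half plane encircling once the root of τ − ξ² = 0 that lies in the upper half-plane (and not the other). Define f(x) = ∮_{γ₊} ξ^j (τ − ξ²)^{−l} e^{i x ξ} dξ. Then the function v(x) = ∮_{γ₊} ( ξ^j (τ − ξ²)^{−l−1} − κ ξ^{j'} τ^{(j−j')/2 − l} (τ − ξ²)^{−1} ) e^{i x ξ} dξ, with j' ∈ {0,1}, j' ≡ j mod 2, satisfies (τ − D²)v = f (with D = −i d/dx) and, for a suitable constant κ = κ(j,l), satisfies v(0) = 0. -/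
open Complex Metric

lemma circle_exp_hasDerivAt (w : ℂ) (r : ℝ) (hr : 0 < r) (H : ℂ → ℂ)
    (hH : ∀ z ∈ sphere w r, ContinuousAt H z) (s₀ : ℝ) :
    HasDerivAt (fun s : ℝ => ∮ z in C(w, r), H z * Complex.exp (Complex.I * s * z))
      (∮ z in C(w, r), H z * (Complex.I * z) * Complex.exp (Complex.I * s₀ * z)) s₀ := by
  have hHc : Continuous fun θ : ℝ => H (circleMap w r θ) := by
    rw [continuous_iff_continuousAt]
    exact fun θ => (hH _ (circleMap_mem_sphere w hr.le θ)).comp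
      (continuous_circleMap w r).continuousAt
  obtain ⟨C, hC⟩ : ∃ C, ∀ z ∈ sphere w r, ‖H z‖ ≤ C :=
    (isCompact_sphere w r).exists_bound_of_continuousOn
      (fun z hz => (hH z hz).continuousWithinAt)
  have hC' : ∀ θ : ℝ, ‖H (circleMap w r θ)‖ ≤ max C 0 := fun θ =>
    le_max_of_le_left (hC _ (circleMap_mem_sphere w hr.le θ))
  set Rw : ℝ := ‖w‖ + r with hRw
  have hzabs : ∀ θ : ℝ, ‖circleMap w r θ‖ ≤ Rw := by
    intro θ
    calc ‖circleMap w r θ‖ = ‖w + (circleMap w r θ - w)‖ := by ring_nf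
    _ ≤ ‖w‖ + ‖circleMap w r θ - w‖ := norm_add_le _ _
    _ ≤ Rw := by rw [circleMap_sub_center, norm_circleMap_zero, abs_of_pos hr]
  have hexp : ∀ (s : ℝ), s ∈ Metric.ball s₀ 1 → ∀ (z : ℂ), ‖z‖ ≤ Rw →
      ‖Complex.exp (Complex.I * s * z)‖ ≤ Real.exp ((|s₀| + 1) * Rw) := by
    intro s hs z hz
    rw [Complex.norm_exp, Real.exp_le_exp]
    have h1 : (Complex.I * s * z).re = -(s * z.im) := by
      simp [Complex.mul_re, Complex.mul_im]
    rw [h1]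
    have h2 : |s| ≤ |s₀| + 1 := by
      have := mem_ball_iff_norm.1 hs
      calc |s| = |s₀ + (s - s₀)| := by ring_nf
      _ ≤ |s₀| + |s - s₀| := abs_add_le _ _
      _ ≤ |s₀| + 1 := by simp only [Real.norm_eq_abs] at this; linarith
    calc -(s * z.im) ≤ |s * z.im| := neg_le_abs _
    _ = |s| * |z.im| := abs_mul _ _
    _ ≤ (|s₀| + 1) * Rw := by
        apply mul_le_mul h2 (le_trans (Complex.abs_im_le_norm z) hz) (abs_nonneg _)
        positivity
  have contF : ∀ s : ℝ, Continuous fun θ : ℝ =>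
      deriv (circleMap w r) θ • (H (circleMap w r θ) *
        Complex.exp (Complex.I * s * circleMap w r θ)) := by
    intro s
    simp only [deriv_circleMap]
    exact ((continuous_circleMap 0 r).mul continuous_const).smul
      (hHc.mul (Complex.continuous_exp.comp (continuous_const.mul (continuous_circleMap w r))))
  have contF' : ∀ s : ℝ, Continuous fun θ : ℝ =>
      deriv (circleMap w r) θ • (H (circleMap w r θ) * (Complex.I * circleMap w r θ) *
        Complex.exp (Complex.I * s * circleMap w r θ)) := by
    intro s
    simp only [deriv_circleMap]
    exact ((continuous_circleMap 0 r).mul continuous_const).smul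
      (((hHc.mul (continuous_const.mul (continuous_circleMap w r)))).mul
        (Complex.continuous_exp.comp (continuous_const.mul (continuous_circleMap w r))))
  simp only [circleIntegral]
  have := intervalIntegral.hasDerivAt_integral_of_dominated_loc_of_deriv_le
    (F := fun (s : ℝ) (θ : ℝ) => deriv (circleMap w r) θ • (H (circleMap w r θ) *
        Complex.exp (Complex.I * s * circleMap w r θ)))
    (F' := fun (s : ℝ) (θ : ℝ) => deriv (circleMap w r) θ • (H (circleMap w r θ) *
        (Complex.I * circleMap w r θ) * Complex.exp (Complex.I * s * circleMap w r θ)))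
    (x₀ := s₀) (a := 0) (b := 2 * Real.pi) (μ := MeasureTheory.volume)
    (bound := fun _ => r * (max C 0 * Rw * Real.exp ((|s₀| + 1) * Rw)))
    (Metric.ball_mem_nhds s₀ one_pos)
    (Filter.Eventually.of_forall fun s => (contF s).aestronglyMeasurable)
    ((contF s₀).intervalIntegrable _ _)
    (contF' s₀).aestronglyMeasurable
    ?_ (intervalIntegrable_const) ?_
  · exact this.2
  · refine Filter.Eventually.of_forall fun θ _ => fun s hs => ?_
    set z := circleMap w r θ
    have h1 : ‖deriv (circleMap w r) θ‖ = r := by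
      simp [deriv_circleMap, abs_of_pos hr, z]
    rw [norm_smul, h1]
    have h2 : ‖H z * (Complex.I * z) * Complex.exp (Complex.I * s * z)‖
        ≤ max C 0 * Rw * Real.exp ((|s₀| + 1) * Rw) := by
      rw [norm_mul, norm_mul, norm_mul]
      simp only [Complex.norm_I, one_mul]
      have := hexp s hs z (hzabs θ)
      have hz := hzabs θ
      have hc := hC' θ
      apply mul_le_mul _ this (norm_nonneg _) (by positivity)
      exact mul_le_mul hc hz (norm_nonneg _) (le_max_right _ _)
    exact mul_le_mul_of_nonneg_left h2 hr.le
  · refine Filter.Eventually.of_forall fun θ _ => fun s _ => ?_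
    set z := circleMap w r θ
    have h1 : HasDerivAt (fun u : ℂ => Complex.exp (Complex.I * u * z))
        (Complex.I * z * Complex.exp (Complex.I * (s : ℂ) * z)) (s : ℂ) := by
      have h0 : HasDerivAt (fun u : ℂ => Complex.I * u * z) (Complex.I * z) (s : ℂ) := by
        simpa using (((hasDerivAt_id ((s : ℂ))).const_mul Complex.I).mul_const z)
      simpa [mul_comm] using h0.cexp
    have h2 := (h1.comp_ofReal).const_mul (deriv (circleMap w r) θ • H z)
    refine (h2.congr_deriv ?_).congr_of_eventuallyEq (Filter.Eventually.of_forall fun u => ?_)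
    · simp only [smul_eq_mul]
      ring
    · simp only [smul_eq_mul]
      ring

lemma circleIntegral_add' {E : Type*} [NormedAddCommGroup E] [NormedSpace ℂ E] {f g : ℂ → E}
    {c : ℂ} {R : ℝ} (hf : CircleIntegrable f c R) (hg : CircleIntegrable g c R) :
    (∮ z in C(c, R), f z + g z) = (∮ z in C(c, R), f z) + ∮ z in C(c, R), g z := by
  simp only [circleIntegral, smul_add, intervalIntegral.integral_add hf.out hg.out]

/-- Footnote 6: for `τ ∉ ℝ` and the contour `γ₊ = C(w, r)` around the upper half-plane
square root `w` of `τ`, the function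
`v(x) = ∮_{γ₊} (ξ^j (τ−ξ²)^{−l−1} − κ ξ^{j'} τ^{(j−j')/2−l} (τ−ξ²)^{−1}) e^{ixξ} dξ`
satisfies `(τ − D²) v = f` (with `D = −i d/dx`, i.e. `τ v + v'' = f`) where
`f(x) = ∮_{γ₊} ξ^j (τ−ξ²)^{−l} e^{ixξ} dξ`, and for a suitable constant `κ`, `v(0) = 0`. -/
theorem stmt4 (τ w : ℂ) (hτ : τ.im ≠ 0) (hw : w ^ 2 = τ) (hwim : 0 < w.im)
    (r : ℝ) (hr : 0 < r) (hr2 : r < ‖(2 * w : ℂ)‖)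
    (j l j' : ℕ) (hj' : j' = j % 2) :
    ∃ κ : ℂ,
      (∮ z in C(w, r),
          (z ^ j * ((τ - z ^ 2) ^ (l + 1))⁻¹
            - κ * z ^ j' * τ ^ (((j : ℂ) - (j' : ℂ)) / 2 - (l : ℂ)) * (τ - z ^ 2)⁻¹)
            * Complex.exp (Complex.I * (0 : ℝ) * z)) = 0 ∧
      ∀ x : ℝ,
        τ * (∮ z in C(w, r),
            (z ^ j * ((τ - z ^ 2) ^ (l + 1))⁻¹
              - κ * z ^ j' * τ ^ (((j : ℂ) - (j' : ℂ)) / 2 - (l : ℂ)) * (τ - z ^ 2)⁻¹)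
              * Complex.exp (Complex.I * (x : ℝ) * z))
          + deriv (deriv (fun s : ℝ => ∮ z in C(w, r),
              (z ^ j * ((τ - z ^ 2) ^ (l + 1))⁻¹
                - κ * z ^ j' * τ ^ (((j : ℂ) - (j' : ℂ)) / 2 - (l : ℂ)) * (τ - z ^ 2)⁻¹)
                * Complex.exp (Complex.I * (s : ℝ) * z))) x
        = ∮ z in C(w, r),
            z ^ j * ((τ - z ^ 2) ^ l)⁻¹ * Complex.exp (Complex.I * (x : ℝ) * z) := by
  set K : ℂ := τ ^ (((j : ℂ) - (j' : ℂ)) / 2 - (l : ℂ)) with hKdef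
  have hτ0 : τ ≠ 0 := fun h => hτ (by simp [h])
  have hw0 : w ≠ 0 := by intro h; exact hτ0 (by rw [← hw, h]; ring)
  have h2w : w + w ≠ 0 := fun h => hw0 (add_self_eq_zero.mp h)
  have hKne : K ≠ 0 := by
    rw [hKdef, Ne, Complex.cpow_eq_zero_iff]
    exact fun h => hτ0 h.1
  -- τ - z² ≠ 0 on the sphere
  have hsph : ∀ z ∈ sphere w r, τ - z ^ 2 ≠ 0 := by
    intro z hz h0
    have hzw : (z - w) * (z + w) = 0 := by
      have : z ^ 2 = τ := by linear_combination -h0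
      rw [← hw] at this; linear_combination this
    have hd : dist z w = r := mem_sphere.mp hz
    rcases mul_eq_zero.mp hzw with h | h
    · rw [sub_eq_zero.mp h] at hd; simp at hd; exact hr.ne' hd.symm
    · have : z = -w := eq_neg_of_add_eq_zero_left h
      rw [this] at hd
      have : dist (-w) w = ‖(2 * w : ℂ)‖ := by
        rw [Complex.dist_eq, show -w - w = -(2*w) by ring, norm_neg]
      rw [this] at hd; exact absurd hd.symm (ne_of_lt hr2)
  have hsph' : ∀ z ∈ sphere w r, z - w ≠ 0 ∧ z + w ≠ 0 := by
    intro z hz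
    constructor
    · intro h; have hd : dist z w = r := mem_sphere.mp hz
      rw [sub_eq_zero.mp h] at hd; simp at hd; exact hr.ne' hd.symm
    · intro h
      have h1 : z = -w := eq_neg_of_add_eq_zero_left h
      have hd : dist z w = r := mem_sphere.mp hz
      rw [h1] at hd
      have : dist (-w) w = ‖(2 * w : ℂ)‖ := by
        rw [Complex.dist_eq, show -w - w = -(2*w) by ring, norm_neg]
      rw [this] at hd; exact absurd hd.symm (ne_of_lt hr2)
  -- continuity of the pieces
  have hq1c : ∀ z ∈ sphere w r, ContinuousAt (fun z : ℂ => z ^ j * ((τ - z ^ 2) ^ (l + 1))⁻¹) z := by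
    intro z hz
    exact (continuous_pow j).continuousAt.mul
      (ContinuousAt.inv₀ ((continuous_const.sub (continuous_pow 2)).pow (l + 1)).continuousAt
        (pow_ne_zero _ (hsph z hz)))
  have hq2c : ∀ z ∈ sphere w r, ContinuousAt (fun z : ℂ => z ^ j' * (τ - z ^ 2)⁻¹) z := by
    intro z hz
    exact (continuous_pow j').continuousAt.mul
      (ContinuousAt.inv₀ (continuous_const.sub (continuous_pow 2)).continuousAt (hsph z hz))
  set A : ℂ := ∮ z in C(w, r), z ^ j * ((τ - z ^ 2) ^ (l + 1))⁻¹ with hAdef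
  set B : ℂ := ∮ z in C(w, r), z ^ j' * (τ - z ^ 2)⁻¹ with hBdef
  -- compute B by the Cauchy integral formula
  have hBval : B = (2 * Real.pi * Complex.I : ℂ) • (-(w ^ j' * (w + w)⁻¹)) := by
    have heq : Set.EqOn (fun z : ℂ => z ^ j' * (τ - z ^ 2)⁻¹)
        (fun z : ℂ => (z - w)⁻¹ • (-(z ^ j' * (z + w)⁻¹))) (sphere w r) := by
      intro z hz
      obtain ⟨h1, h2⟩ := hsph' z hz
      have h3 : τ - z ^ 2 ≠ 0 := hsph z hz
      simp only [smul_eq_mul]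
      rw [← hw] at h3 ⊢
      field_simp
      ring
    rw [hBdef, circleIntegral.integral_congr hr.le heq]
    have hdiff : DiffContOnCl ℂ (fun z : ℂ => -(z ^ j' * (z + w)⁻¹)) (ball w r) := by
      apply DifferentiableOn.diffContOnCl
      rw [closure_ball w hr.ne']
      intro z hz
      have hzw : z + w ≠ 0 := by
        intro h
        have h1 : z = -w := eq_neg_of_add_eq_zero_left h
        have hd : dist z w ≤ r := mem_closedBall.mp hz
        rw [h1] at hd
        have : dist (-w) w = ‖(2 * w : ℂ)‖ := by
          rw [Complex.dist_eq, show -w - w = -(2*w) by ring, norm_neg]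
        rw [this] at hd; linarith
      exact (((differentiableAt_pow j').mul
        ((differentiableAt_id.add_const w).inv hzw)).neg).differentiableWithinAt
    exact hdiff.circleIntegral_sub_inv_smul (mem_ball_self hr)
  have hBne : B ≠ 0 := by
    rw [hBval]
    refine smul_ne_zero ?_ (neg_ne_zero.2 (mul_ne_zero (pow_ne_zero _ hw0) (inv_ne_zero h2w)))
    exact mul_ne_zero (mul_ne_zero two_ne_zero (Complex.ofReal_ne_zero.2 Real.pi_ne_zero))
      Complex.I_ne_zero
  set κ : ℂ := A / (K * B) with hκdef
  -- integrability facts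
  have hGc : ∀ z ∈ sphere w r, ContinuousAt
      (fun z : ℂ => z ^ j * ((τ - z ^ 2) ^ (l + 1))⁻¹ - κ * z ^ j' * K * (τ - z ^ 2)⁻¹) z := by
    intro z hz
    refine (hq1c z hz).sub ?_
    exact ((continuous_const.mul (continuous_pow j')).mul continuous_const).continuousAt.mul
      (ContinuousAt.inv₀ (continuous_const.sub (continuous_pow 2)).continuousAt (hsph z hz))
  refine ⟨κ, ?_, ?_⟩
  · -- v(0) = 0
    simp only [Complex.ofReal_zero, mul_zero, zero_mul, Complex.exp_zero, mul_one]
    have hcongr : Set.EqOn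
        (fun z : ℂ => z ^ j * ((τ - z ^ 2) ^ (l + 1))⁻¹ - κ * z ^ j' * K * (τ - z ^ 2)⁻¹)
        (fun z : ℂ => z ^ j * ((τ - z ^ 2) ^ (l + 1))⁻¹
          - (κ * K) • (z ^ j' * (τ - z ^ 2)⁻¹)) (sphere w r) := by
      intro z _; simp only [smul_eq_mul]; ring
    rw [circleIntegral.integral_congr hr.le hcongr,
      circleIntegral.integral_sub (g := fun z => (κ * K) • (z ^ j' * (τ - z ^ 2)⁻¹))
        (ContinuousOn.circleIntegrable hr.le fun z hz => (hq1c z hz).continuousWithinAt)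
        (ContinuousOn.circleIntegrable hr.le fun z hz =>
          ((hq2c z hz).const_smul (κ * K) :
            ContinuousAt (fun z => (κ * K) • (z ^ j' * (τ - z ^ 2)⁻¹)) z).continuousWithinAt),
      circleIntegral.integral_smul]
    rw [← hAdef, ← hBdef, hκdef, smul_eq_mul]
    field_simp
    ring
  · -- the ODE
    intro x
    have D1 : ∀ s : ℝ, HasDerivAt (fun s : ℝ => ∮ z in C(w, r),
        (z ^ j * ((τ - z ^ 2) ^ (l + 1))⁻¹ - κ * z ^ j' * K * (τ - z ^ 2)⁻¹)
          * Complex.exp (Complex.I * s * z))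
        (∮ z in C(w, r),
        (z ^ j * ((τ - z ^ 2) ^ (l + 1))⁻¹ - κ * z ^ j' * K * (τ - z ^ 2)⁻¹)
          * (Complex.I * z) * Complex.exp (Complex.I * s * z)) s :=
      fun s => circle_exp_hasDerivAt w r hr _ hGc s
    have hG2c : ∀ z ∈ sphere w r, ContinuousAt
        (fun z : ℂ => (z ^ j * ((τ - z ^ 2) ^ (l + 1))⁻¹ - κ * z ^ j' * K * (τ - z ^ 2)⁻¹)
          * (Complex.I * z)) z := by
      intro z hz
      exact (hGc z hz).mul (continuous_const.mul continuous_id).continuousAt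
    have D2 : HasDerivAt (fun s : ℝ => ∮ z in C(w, r),
        (z ^ j * ((τ - z ^ 2) ^ (l + 1))⁻¹ - κ * z ^ j' * K * (τ - z ^ 2)⁻¹)
          * (Complex.I * z) * Complex.exp (Complex.I * s * z))
        (∮ z in C(w, r),
        (z ^ j * ((τ - z ^ 2) ^ (l + 1))⁻¹ - κ * z ^ j' * K * (τ - z ^ 2)⁻¹)
          * (Complex.I * z) * (Complex.I * z) * Complex.exp (Complex.I * x * z)) x := by
      have := circle_exp_hasDerivAt w r hr
        (fun z : ℂ => (z ^ j * ((τ - z ^ 2) ^ (l + 1))⁻¹ - κ * z ^ j' * K * (τ - z ^ 2)⁻¹)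
          * (Complex.I * z)) hG2c x
      exact this
    have hder : deriv (deriv (fun s : ℝ => ∮ z in C(w, r),
        (z ^ j * ((τ - z ^ 2) ^ (l + 1))⁻¹ - κ * z ^ j' * K * (τ - z ^ 2)⁻¹)
          * Complex.exp (Complex.I * s * z))) x
        = ∮ z in C(w, r),
        (z ^ j * ((τ - z ^ 2) ^ (l + 1))⁻¹ - κ * z ^ j' * K * (τ - z ^ 2)⁻¹)
          * (Complex.I * z) * (Complex.I * z) * Complex.exp (Complex.I * x * z) := by
      rw [funext fun s => (D1 s).deriv]
      exact D2.deriv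
    rw [hder]
    -- now everything is a circle integral
    have hmul : τ * (∮ z in C(w, r),
        (z ^ j * ((τ - z ^ 2) ^ (l + 1))⁻¹ - κ * z ^ j' * K * (τ - z ^ 2)⁻¹)
          * Complex.exp (Complex.I * x * z))
        = ∮ z in C(w, r), τ • ((z ^ j * ((τ - z ^ 2) ^ (l + 1))⁻¹
            - κ * z ^ j' * K * (τ - z ^ 2)⁻¹) * Complex.exp (Complex.I * x * z)) := by
      rw [circleIntegral.integral_smul, smul_eq_mul]
    rw [hmul]
    have hexpc : Continuous fun z : ℂ => Complex.exp (Complex.I * x * z) :=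
      Complex.continuous_exp.comp (continuous_const.mul continuous_id)
    have hint1 : CircleIntegrable (fun z : ℂ => τ • ((z ^ j * ((τ - z ^ 2) ^ (l + 1))⁻¹
        - κ * z ^ j' * K * (τ - z ^ 2)⁻¹) * Complex.exp (Complex.I * x * z))) w r :=
      ContinuousOn.circleIntegrable hr.le fun z hz =>
        (((hGc z hz).mul hexpc.continuousAt).const_smul τ).continuousWithinAt
    have hint2 : CircleIntegrable (fun z : ℂ =>
        (z ^ j * ((τ - z ^ 2) ^ (l + 1))⁻¹ - κ * z ^ j' * K * (τ - z ^ 2)⁻¹)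
          * (Complex.I * z) * (Complex.I * z) * Complex.exp (Complex.I * x * z)) w r :=
      ContinuousOn.circleIntegrable hr.le fun z hz =>
        ((((hG2c z hz).mul (continuous_const.mul continuous_id).continuousAt).mul
          hexpc.continuousAt)).continuousWithinAt
    rw [← circleIntegral_add' hint1 hint2]
    have hpt : Set.EqOn
        (fun z : ℂ => τ • ((z ^ j * ((τ - z ^ 2) ^ (l + 1))⁻¹
            - κ * z ^ j' * K * (τ - z ^ 2)⁻¹) * Complex.exp (Complex.I * x * z))
          + (z ^ j * ((τ - z ^ 2) ^ (l + 1))⁻¹ - κ * z ^ j' * K * (τ - z ^ 2)⁻¹)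
            * (Complex.I * z) * (Complex.I * z) * Complex.exp (Complex.I * x * z))
        (fun z : ℂ => z ^ j * ((τ - z ^ 2) ^ l)⁻¹ * Complex.exp (Complex.I * x * z)
          - (κ * K) • (z ^ j' * Complex.exp (Complex.I * x * z))) (sphere w r) := by
      intro z hz
      have h0 : τ - z ^ 2 ≠ 0 := hsph z hz
      have hI2 : Complex.I * Complex.I = -1 := Complex.I_mul_I
      have key : (τ - z ^ 2) * (z ^ j * ((τ - z ^ 2) ^ (l + 1))⁻¹
          - κ * z ^ j' * K * (τ - z ^ 2)⁻¹)
          = z ^ j * ((τ - z ^ 2) ^ l)⁻¹ - κ * K * z ^ j' := by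
        have hp : (τ - z ^ 2) ^ (l + 1) = (τ - z ^ 2) ^ l * (τ - z ^ 2) := pow_succ _ _
        field_simp [hp]
        ring
      simp only [smul_eq_mul]
      linear_combination ((z ^ j * ((τ - z ^ 2) ^ (l + 1))⁻¹
          - κ * z ^ j' * K * (τ - z ^ 2)⁻¹) * z ^ 2
          * Complex.exp (Complex.I * x * z)) * hI2
        + Complex.exp (Complex.I * x * z) * key
    rw [circleIntegral.integral_congr hr.le hpt]
    have hint3 : CircleIntegrable
        (fun z : ℂ => z ^ j * ((τ - z ^ 2) ^ l)⁻¹ * Complex.exp (Complex.I * x * z)) w r :=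
      ContinuousOn.circleIntegrable hr.le fun z hz =>
        (((continuous_pow j).continuousAt.mul
          (ContinuousAt.inv₀ ((continuous_const.sub (continuous_pow 2)).pow l).continuousAt
            (pow_ne_zero _ (hsph z hz)))).mul hexpc.continuousAt).continuousWithinAt
    have hint4 : CircleIntegrable
        (fun z : ℂ => (κ * K) • (z ^ j' * Complex.exp (Complex.I * x * z))) w r :=
      ContinuousOn.circleIntegrable hr.le fun z _ =>
        ((((continuous_pow j').mul hexpc).continuousAt).const_smul (κ * K)).continuousWithinAt
    rw [circleIntegral.integral_sub hint3 hint4, circleIntegral.integral_smul]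
    have hzero : (∮ z in C(w, r), z ^ j' * Complex.exp (Complex.I * x * z)) = 0 := by
      refine Complex.circleIntegral_eq_zero_of_differentiable_on_off_countable hr.le
        Set.countable_empty (((continuous_pow j').mul hexpc).continuousOn) ?_
      intro z _
      exact (differentiableAt_pow j').mul
        ((differentiableAt_id.const_mul (Complex.I * x)).cexp)
    rw [hzero, smul_zero, sub_zero]
end

section
/- Let φ, φ⁰ : ℝ^d → ℝ be C² solutions of the same first-order PDE (eikonal equation) a(x, ∇φ) = E on a neighborhood of a boundary point with x₁ = 0, where a(x,ξ) = ξ₁² + b(x, ξ') and b is C¹. Suppose φ = φ⁰ and ∂_{x₁}φ = −∂_{x₁}φ⁰ on {x₁ = 0}, with σ := |∂_{x₁}φ| ≥ c > 0 there, and that all second derivatives of φ⁰ are bounded by M. Then on {x₁ = 0}, the second derivative ∂²_{x₁}φ satisfies |∂²_{x₁}φ| ≤ C(M, b) σ^{−1}. -/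
open Real

section
variable {d : ℕ}
local notation "E" => EuclideanSpace ℝ (Fin d)

set_option maxHeartbeats 2000000 in
private theorem stmt11_aux (φ φ₀ : ℝ → E → ℝ)
    (b : ℝ × E → E → ℝ)
    (En M c : ℝ) (hc : 0 < c) (hM : 0 < M)
    (hφ : ContDiff ℝ 2 (fun p : ℝ × E => φ p.1 p.2))
    (hφ₀ : ContDiff ℝ 2 (fun p : ℝ × E => φ₀ p.1 p.2))
    (hb : ContDiff ℝ 1 (fun p : (ℝ × E) × E => b p.1 p.2))
    (hbM : ∀ p : (ℝ × E) × E,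
      ‖fderiv ℝ (fun q : (ℝ × E) × E => b q.1 q.2) p‖ ≤ M)
    (hφ₀M : ∀ p : ℝ × E,
      ‖fderiv ℝ (fderiv ℝ (fun q : ℝ × E => φ₀ q.1 q.2)) p‖ ≤ M)
    (heik : ∀ x₁ x', (deriv (fun s => φ s x') x₁) ^ 2 =
      En - b (x₁, x') (gradient (fun z => φ x₁ z) x'))
    (hmatch' : ∀ x', deriv (fun s => φ s x') 0 = -deriv (fun s => φ₀ s x') 0)
    (hσ : ∀ x', c ≤ |deriv (fun s => φ s x') 0|) :
    ∃ C > 0, ∀ x',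
      |deriv (fun s => deriv (fun t => φ t x') s) 0|
        ≤ C / |deriv (fun s => φ s x') 0| := by
  classical
  set f : ℝ × E → ℝ := fun p => φ p.1 p.2 with hf_def
  set f₀ : ℝ × E → ℝ := fun p => φ₀ p.1 p.2 with hf0_def
  set B : (ℝ × E) × E → ℝ := fun p => b p.1 p.2 with hB_def
  have hfd : Differentiable ℝ f := hφ.differentiable (by norm_num)
  have hfd0 : Differentiable ℝ f₀ := hφ₀.differentiable (by norm_num)
  have hf' : ContDiff ℝ 1 (fderiv ℝ f) := hφ.fderiv_right (by norm_num)
  have hf0' : ContDiff ℝ 1 (fderiv ℝ f₀) := hφ₀.fderiv_right (by norm_num)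
  -- the curve s ↦ (s, x')
  have hι : ∀ (x' : E) (s : ℝ), HasDerivAt (fun t : ℝ => ((t, x') : ℝ × E))
      ((1 : ℝ), (0 : E)) s :=
    fun x' s => HasDerivAt.prodMk (hasDerivAt_id s) (hasDerivAt_const s x')
  -- normal derivative as fderiv
  have hu : ∀ (x₁ : ℝ) (x' : E),
      HasDerivAt (fun s => φ s x') (fderiv ℝ f (x₁, x') ((1 : ℝ), (0 : E))) x₁ := by
    intro x₁ x'
    exact (hfd (x₁, x')).hasFDerivAt.comp_hasDerivAt x₁ (hι x' x₁)
  have hu0 : ∀ (x₁ : ℝ) (x' : E),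
      HasDerivAt (fun s => φ₀ s x') (fderiv ℝ f₀ (x₁, x') ((1 : ℝ), (0 : E))) x₁ := by
    intro x₁ x'
    exact (hfd0 (x₁, x')).hasFDerivAt.comp_hasDerivAt x₁ (hι x' x₁)
  have hueq : ∀ (x₁ : ℝ) (x' : E),
      deriv (fun s => φ s x') x₁ = fderiv ℝ f (x₁, x') ((1 : ℝ), (0 : E)) :=
    fun x₁ x' => (hu x₁ x').deriv
  have hueq0 : ∀ (x₁ : ℝ) (x' : E),
      deriv (fun s => φ₀ s x') x₁ = fderiv ℝ f₀ (x₁, x') ((1 : ℝ), (0 : E)) :=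
    fun x₁ x' => (hu0 x₁ x').deriv
  -- the linear map L ↦ (toDual).symm (L ∘ inr)
  set T : ((ℝ × E) →L[ℝ] ℝ) →L[ℝ] (E →L[ℝ] ℝ) :=
    (ContinuousLinearMap.compL ℝ E (ℝ × E) ℝ).flip (ContinuousLinearMap.inr ℝ ℝ E) with hT_def
  set Φ : ((ℝ × E) →L[ℝ] ℝ) →L[ℝ] E :=
    ((InnerProductSpace.toDual ℝ E).symm.toContinuousLinearEquiv.toContinuousLinearMap).comp T
    with hΦ_def
  have hΦ_apply : ∀ L : (ℝ × E) →L[ℝ] ℝ,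
      Φ L = (InnerProductSpace.toDual ℝ E).symm (L.comp (ContinuousLinearMap.inr ℝ ℝ E)) := by
    intro L; rfl
  -- gradient of the slice
  have hGrad : ∀ (s : ℝ) (x' : E),
      gradient (fun z => φ s z) x' = Φ (fderiv ℝ f (s, x')) := by
    intro s x'
    have hslice : fderiv ℝ (fun z => φ s z) x'
        = (fderiv ℝ f (s, x')).comp (ContinuousLinearMap.inr ℝ ℝ E) := by
      have h1 : HasFDerivAt (fun z : E => ((s, z) : ℝ × E))
          (ContinuousLinearMap.inr ℝ ℝ E) x' := hasFDerivAt_prodMk_right s x'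
      exact ((hfd (s, x')).hasFDerivAt.comp x' h1).fderiv
    rw [hΦ_apply, ← hslice]
    rfl
  refine ⟨M * max 1 M / 2, by positivity, ?_⟩
  intro x'
  set f'' := fderiv ℝ (fderiv ℝ f) (((0 : ℝ), x') : ℝ × E) with hf''_def
  set f₀'' := fderiv ℝ (fderiv ℝ f₀) (((0 : ℝ), x') : ℝ × E) with hf0''_def
  have hsymm : ∀ v w : ℝ × E, f'' v w = f'' w v := fun v w =>
    (hφ.contDiffAt.isSymmSndFDerivAt (by norm_num)) v w
  have hsymm0 : ∀ v w : ℝ × E, f₀'' v w = f₀'' w v := fun v w =>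
    (hφ₀.contDiffAt.isSymmSndFDerivAt (by norm_num)) v w
  have hDf : HasFDerivAt (fderiv ℝ f) f'' (0, x') :=
    (hf'.differentiable one_ne_zero (0, x')).hasFDerivAt
  have hDf0 : HasFDerivAt (fderiv ℝ f₀) f₀'' (0, x') :=
    (hf0'.differentiable one_ne_zero (0, x')).hasFDerivAt
  set e₁ : ℝ × E := ((1 : ℝ), (0 : E)) with he₁
  have he₁norm : ‖e₁‖ = 1 := by
    simp [he₁, Prod.norm_def]
  -- derivative of s ↦ fderiv f (s,x')
  have hDfs : HasDerivAt (fun s => fderiv ℝ f (s, x')) (f'' e₁) 0 :=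
    hDf.comp_hasDerivAt 0 (hι x' 0)
  -- derivative of u(s) = fderiv f (s,x') e₁
  have hu' : HasDerivAt (fun s => fderiv ℝ f (s, x') e₁) (f'' e₁ e₁) 0 := by
    have := hDfs.clm_apply (hasDerivAt_const (0 : ℝ) e₁)
    simpa using this
  -- mixed derivative identity : f'' e₁ (0,v) = - f₀'' e₁ (0,v)
  have hmixed : (f'' e₁).comp (ContinuousLinearMap.inr ℝ ℝ E)
      = -((f₀'' e₁).comp (ContinuousLinearMap.inr ℝ ℝ E)) := by
    have h1 : HasFDerivAt (fun z : E => fderiv ℝ f (0, z) e₁)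
        ((ContinuousLinearMap.apply ℝ ℝ e₁).comp
          (f''.comp (ContinuousLinearMap.inr ℝ ℝ E))) x' :=
      (ContinuousLinearMap.apply ℝ ℝ e₁).hasFDerivAt.comp x'
        (hDf.comp x' (hasFDerivAt_prodMk_right 0 x'))
    have h2 : HasFDerivAt (fun z : E => -(fderiv ℝ f₀ (0, z) e₁))
        (-((ContinuousLinearMap.apply ℝ ℝ e₁).comp
          (f₀''.comp (ContinuousLinearMap.inr ℝ ℝ E)))) x' :=
      ((ContinuousLinearMap.apply ℝ ℝ e₁).hasFDerivAt.comp x'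
        (hDf0.comp x' (hasFDerivAt_prodMk_right 0 x'))).neg
    have hfun : (fun z : E => fderiv ℝ f (0, z) e₁)
        = fun z : E => -(fderiv ℝ f₀ (0, z) e₁) := by
      funext z
      rw [← hueq 0 z, ← hueq0 0 z, hmatch' z]
    rw [hfun] at h1
    have huniq := h1.unique h2
    ext v
    have hv := congrArg (fun L => L v) huniq
    simp only [ContinuousLinearMap.coe_comp', Function.comp_apply,
      ContinuousLinearMap.neg_apply, ContinuousLinearMap.apply_apply] at hv ⊢
    rw [ContinuousLinearMap.inr_apply] at hv ⊢
    rw [hsymm, hsymm0]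
    exact hv
  -- the gradient curve
  set G : ℝ → E := fun s => gradient (fun z => φ s z) x' with hG_def
  set w : E := Φ (f'' e₁) with hw_def
  have hG : HasDerivAt G w 0 := by
    have h1 := Φ.hasFDerivAt.comp_hasDerivAt 0 hDfs
    have hfun : G = fun s => Φ (fderiv ℝ f (s, x')) := funext fun s => hGrad s x'
    rw [hw_def, hfun]
    exact h1
  have hwnorm : ‖w‖ ≤ M := by
    have h1 : ‖w‖ = ‖(f'' e₁).comp (ContinuousLinearMap.inr ℝ ℝ E)‖ := by
      rw [hw_def, hΦ_apply]
      exact LinearIsometryEquiv.norm_map _ _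
    rw [h1, hmixed, norm_neg]
    refine ContinuousLinearMap.opNorm_le_bound _ hM.le fun v => ?_
    have h2 : ‖f₀'' e₁ ((0 : ℝ), v)‖ ≤ ‖f₀''‖ * ‖e₁‖ * ‖((0 : ℝ), v)‖ :=
      f₀''.le_opNorm₂ e₁ ((0 : ℝ), v)
    have h3 : ‖((0 : ℝ), v)‖ = ‖v‖ := by simp [Prod.norm_def]
    have h4 : ‖f₀''‖ ≤ M := hφ₀M (0, x')
    calc ‖((f₀'' e₁).comp (ContinuousLinearMap.inr ℝ ℝ E)) v‖
        = ‖f₀'' e₁ ((0 : ℝ), v)‖ := rfl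
      _ ≤ ‖f₀''‖ * ‖e₁‖ * ‖((0 : ℝ), v)‖ := h2
      _ = ‖f₀''‖ * ‖v‖ := by rw [he₁norm, h3]; ring
      _ ≤ M * ‖v‖ := by gcongr
  -- derivative of s ↦ B ((s,x'), G s)
  set DB := fderiv ℝ B ((((0 : ℝ), x'), G 0) : (ℝ × E) × E) with hDB_def
  have hγ : HasDerivAt (fun s : ℝ => ((((s, x') : ℝ × E), G s) : (ℝ × E) × E))
      ((e₁, w) : (ℝ × E) × E) 0 :=
    HasDerivAt.prodMk (hι x' 0) hG
  have hBg : HasDerivAt (fun s : ℝ => B ((s, x'), G s)) (DB (e₁, w)) 0 :=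
    ((hb.differentiable one_ne_zero) _).hasFDerivAt.comp_hasDerivAt 0 hγ
  -- two computations of the derivative of s ↦ u(s)^2
  set u0 : ℝ := fderiv ℝ f ((0 : ℝ), x') e₁ with hu0_def
  have hfun1 : (fun s => deriv (fun t => φ t x') s) = fun s => fderiv ℝ f (s, x') e₁ :=
    funext fun s => hueq s x'
  have hA : HasDerivAt (fun s => (deriv (fun t => φ t x') s) ^ 2) (2 * u0 * f'' e₁ e₁) 0 := by
    have hfun1' : (fun s => (deriv (fun t => φ t x') s) ^ 2)
        = fun s => (fderiv ℝ f (s, x') e₁) ^ 2 := by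
      funext s; rw [hueq s x']
    rw [hfun1']
    have := hu'.pow 2
    simp [hu0_def] at this
    exact this
  have hB2 : HasDerivAt (fun s => (deriv (fun t => φ t x') s) ^ 2) (-(DB (e₁, w))) 0 := by
    have hfun2 : (fun s => (deriv (fun t => φ t x') s) ^ 2)
        = fun s => En - B ((s, x'), G s) := funext fun s => heik s x'
    rw [hfun2]
    have := (hasDerivAt_const (0 : ℝ) En).sub hBg
    simp at this
    exact this
  have hkey : 2 * u0 * f'' e₁ e₁ = -(DB (e₁, w)) := hA.unique hB2
  -- bound on DB (e₁, w)
  have hDBbound : |DB (e₁, w)| ≤ M * max 1 M := by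
    have h1 : ‖DB (e₁, w)‖ ≤ ‖DB‖ * ‖((e₁, w) : (ℝ × E) × E)‖ := DB.le_opNorm _
    have h2 : ‖((e₁, w) : (ℝ × E) × E)‖ = max 1 ‖w‖ := by
      rw [Prod.norm_def, he₁norm]
    have h3 : max 1 ‖w‖ ≤ max 1 M := max_le_max le_rfl hwnorm
    have h4 : ‖DB‖ ≤ M := hbM ((0, x'), G 0)
    calc |DB (e₁, w)| ≤ ‖DB‖ * ‖((e₁, w) : (ℝ × E) × E)‖ := h1
      _ = ‖DB‖ * max 1 ‖w‖ := by rw [h2]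
      _ ≤ M * max 1 M := mul_le_mul h4 h3 (by positivity) hM.le
  -- finish
  have htarget : deriv (fun s => deriv (fun t => φ t x') s) 0 = f'' e₁ e₁ := by
    rw [hfun1]
    exact hu'.deriv
  have hu0eq : deriv (fun s => φ s x') 0 = u0 := hueq 0 x'
  rw [htarget, hu0eq]
  have hu0pos : 0 < |u0| := lt_of_lt_of_le hc (hu0eq ▸ hσ x')
  rw [le_div_iff₀ hu0pos]
  have h5 : 2 * |u0| * |f'' e₁ e₁| = |DB (e₁, w)| := by
    rw [← abs_neg (DB (e₁, w)), ← hkey, abs_mul, abs_mul, abs_two]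
  nlinarith [abs_nonneg (f'' e₁ e₁), abs_nonneg u0]

end

/-- Estimate (5.10): if `φ, φ⁰` solve the eikonal equation
`(∂₁φ)² = E − b(x, ∇'φ)` near `{x₁ = 0}`, match on the boundary with opposite normal
derivatives, `σ = |∂₁φ| ≥ c > 0` there, the second derivatives of `φ⁰` are bounded by `M`
and `b` has `C¹`-bounds `M`, then `|∂²_{x₁}φ| ≤ C σ^{−1}` on `{x₁ = 0}`. -/
theorem stmt11 {d : ℕ} (φ φ₀ : ℝ → EuclideanSpace ℝ (Fin d) → ℝ)
    (b : ℝ × EuclideanSpace ℝ (Fin d) → EuclideanSpace ℝ (Fin d) → ℝ)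
    (En M c : ℝ) (hc : 0 < c) (hM : 0 < M)
    (hφ : ContDiff ℝ 2 (fun p : ℝ × EuclideanSpace ℝ (Fin d) => φ p.1 p.2))
    (hφ₀ : ContDiff ℝ 2 (fun p : ℝ × EuclideanSpace ℝ (Fin d) => φ₀ p.1 p.2))
    (hb : ContDiff ℝ 1
      (fun p : (ℝ × EuclideanSpace ℝ (Fin d)) × EuclideanSpace ℝ (Fin d) => b p.1 p.2))
    (hbM : ∀ p : (ℝ × EuclideanSpace ℝ (Fin d)) × EuclideanSpace ℝ (Fin d),
      ‖fderiv ℝ (fun q : (ℝ × EuclideanSpace ℝ (Fin d)) × EuclideanSpace ℝ (Fin d) =>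
        b q.1 q.2) p‖ ≤ M)
    (hφ₀M : ∀ p : ℝ × EuclideanSpace ℝ (Fin d),
      ‖fderiv ℝ (fderiv ℝ (fun q : ℝ × EuclideanSpace ℝ (Fin d) => φ₀ q.1 q.2)) p‖ ≤ M)
    (heik : ∀ x₁ x', (deriv (fun s => φ s x') x₁) ^ 2 =
      En - b (x₁, x') (gradient (fun z => φ x₁ z) x'))
    (heik0 : ∀ x₁ x', (deriv (fun s => φ₀ s x') x₁) ^ 2 =
      En - b (x₁, x') (gradient (fun z => φ₀ x₁ z) x'))
    (hmatch : ∀ x', φ 0 x' = φ₀ 0 x')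
    (hmatch' : ∀ x', deriv (fun s => φ s x') 0 = -deriv (fun s => φ₀ s x') 0)
    (hσ : ∀ x', c ≤ |deriv (fun s => φ s x') 0|) :
    ∃ C > 0, ∀ x',
      |deriv (fun s => deriv (fun t => φ t x') s) 0|
        ≤ C / |deriv (fun s => φ s x') 0| := by
  exact stmt11_aux φ φ₀ b En M c hc hM hφ hφ₀ hb hbM hφ₀M heik hmatch' hσ
end
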